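/- Let α ⊆ {1,…,d} with |α| ≥ 2, let ρ_α ∈ (0,1), let ρ̇_{j,α} ≥ 0 for j ∈ α with Σ_{j∈α} ρ̇_{j,α} = ρ_α, and let ρ_{{j,j'}} ≥ ρ_α for all j, j' ∈ α. Then σ² := 1 − 2ρ_α + ρ_α^{−1} Σ_{j∈α} Σ_{j'∈α} ρ̇_{j,α} ρ̇_{j',α} ρ_{{j,j'}} satisfies σ² ≥ (1 − ρ_α)² > 0. -/
import Mathlib


open Finset

/-- Lower bound on the asymptotic variance of the Hill estimator:
σ² = 1 − 2ρ + ρ⁻¹ ΣΣ ρ̇_j ρ̇_{j'} ρ_{jj'} ≥ (1−ρ)² > 0. -/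
theorem stmt10 {d : ℕ} (α : Finset (Fin d)) (hα : 2 ≤ α.card)
    (ρ : ℝ) (hρ0 : 0 < ρ) (hρ1 : ρ < 1)
    (ρdot : Fin d → ℝ) (hdot : ∀ j ∈ α, 0 ≤ ρdot j)
    (heuler : ∑ j ∈ α, ρdot j = ρ)
    (ρ2 : Fin d → Fin d → ℝ)
    (hρ2 : ∀ j ∈ α, ∀ j' ∈ α, ρ ≤ ρ2 j j')
    (σ2 : ℝ)
    (hσ2 : σ2 = 1 - 2 * ρ + ρ⁻¹ * ∑ j ∈ α, ∑ j' ∈ α, ρdot j * ρdot j' * ρ2 j j') :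
    (1 - ρ) ^ 2 ≤ σ2 ∧ 0 < σ2 := by
  have key : ρ * ρ * ρ ≤ ∑ j ∈ α, ∑ j' ∈ α, ρdot j * ρdot j' * ρ2 j j' := by
    have h1 : ∑ j ∈ α, ∑ j' ∈ α, ρdot j * ρdot j' * ρ
        ≤ ∑ j ∈ α, ∑ j' ∈ α, ρdot j * ρdot j' * ρ2 j j' := by
      refine Finset.sum_le_sum fun j hj => Finset.sum_le_sum fun j' hj' => ?_
      exact mul_le_mul_of_nonneg_left (hρ2 j hj j' hj')
        (mul_nonneg (hdot j hj) (hdot j' hj'))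
    calc ρ * ρ * ρ = ∑ j ∈ α, ∑ j' ∈ α, ρdot j * ρdot j' * ρ := by
          rw [← heuler]
          rw [Finset.sum_mul_sum]
          rw [Finset.sum_mul]
          exact Finset.sum_congr rfl fun j _ => by rw [Finset.sum_mul]
      _ ≤ _ := h1
  have hle : (1 - ρ) ^ 2 ≤ σ2 := by
    rw [hσ2]
    have : ρ⁻¹ * (ρ * ρ * ρ) ≤ ρ⁻¹ * ∑ j ∈ α, ∑ j' ∈ α, ρdot j * ρdot j' * ρ2 j j' :=
      mul_le_mul_of_nonneg_left key (inv_nonneg.mpr hρ0.le)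
    have h2 : ρ⁻¹ * (ρ * ρ * ρ) = ρ ^ 2 := by field_simp
    nlinarith
  exact ⟨hle, lt_of_lt_of_le (by nlinarith) hle⟩
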